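/- arXiv:math/0411002 — 2 statements merged into one kernel-verified Lean document; each statement's English description precedes it below -/
import Mathlib

section
/- (q-Dobinski formula.) Let q ∈ ℝ with 0 < q < 1. For every natural number n, the series Σ_{j=0}^{∞} 1/[j]_q! and Σ_{m=0}^{∞} ([m]_q)^n/[m]_q! both converge, and (Σ_{j=0}^{∞} 1/[j]_q!) · B_n(q) = Σ_{m=0}^{∞} ([m]_q)^n / [m]_q!, where B_n(q) = Σ_{k=0}^{n} S_q(n,k) is the n-th q-Bell number; i.e. B_n(q) = e_q^{-1} Σ_{m≥0} [m]_q^n/[m]_q! with e_q = exp_q(1). -/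
/-- The q-integer `[m]_q = Σ_{i=0}^{m-1} q^i`. -/
def qInt (q : ℝ) (m : ℕ) : ℝ :=
  ∑ i ∈ Finset.range m, q ^ i

/-- The q-factorial `[m]_q! = ∏_{j=1}^{m} [j]_q`, with `[0]_q! = 1`. -/
def qFact (q : ℝ) : ℕ → ℝ
  | 0 => 1
  | m + 1 => qInt q (m + 1) * qFact q m

/-- The Carlitz–Gould q-Stirling numbers of the second kind. -/
def qStirling (q : ℝ) : ℕ → ℕ → ℝ
  | 0, 0 => 1
  | 0, _ + 1 => 0
  | _ + 1, 0 => 0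
  | n + 1, k + 1 => q ^ k * qStirling q n k + qInt q (k + 1) * qStirling q n (k + 1)

lemma qInt_nonneg {q : ℝ} (hq0 : 0 < q) (m : ℕ) : 0 ≤ qInt q m :=
  Finset.sum_nonneg fun i _ => pow_nonneg hq0.le i

lemma qInt_pos {q : ℝ} (hq0 : 0 < q) {m : ℕ} (hm : 0 < m) : 0 < qInt q m := by
  unfold qInt
  exact Finset.sum_pos (fun i _ => pow_pos hq0 i) ⟨0, Finset.mem_range.mpr hm⟩

lemma qInt_le {q : ℝ} (hq0 : 0 < q) (hq1 : q < 1) (m : ℕ) : qInt q m ≤ (1 - q)⁻¹ := by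
  have h1 : (0:ℝ) < 1 - q := by linarith
  unfold qInt
  rw [geom_sum_eq (by linarith : q ≠ 1)]
  have hx : (q ^ m - 1) / (q - 1) = (1 - q ^ m) * (1 - q)⁻¹ := by
    rw [div_eq_iff (by linarith : q - 1 ≠ 0)]
    field_simp
    ring
  rw [hx]
  have hpm : 0 ≤ q ^ m := pow_nonneg hq0.le m
  calc (1 - q ^ m) * (1 - q)⁻¹ ≤ 1 * (1 - q)⁻¹ := by
        apply mul_le_mul_of_nonneg_right (by linarith) (by positivity)
  _ = (1 - q)⁻¹ := one_mul _

lemma qFact_pos {q : ℝ} (hq0 : 0 < q) (m : ℕ) : 0 < qFact q m := by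
  induction m with
  | zero => norm_num [qFact]
  | succ m ih => exact mul_pos (qInt_pos hq0 m.succ_pos) ih

lemma one_add_le_qInt {q : ℝ} (hq0 : 0 < q) {m : ℕ} (hm : 2 ≤ m) : 1 + q ≤ qInt q m := by
  have h : qInt q 2 ≤ qInt q m := by
    unfold qInt
    exact Finset.sum_le_sum_of_subset_of_nonneg (Finset.range_subset_range.mpr hm)
      (fun i _ _ => pow_nonneg hq0.le i)
  calc 1 + q = qInt q 2 := by simp [qInt, Finset.sum_range_succ]
  _ ≤ qInt q m := h

lemma qFact_ge {q : ℝ} (hq0 : 0 < q) (m : ℕ) : (1 + q) ^ m ≤ (1 + q) * qFact q m := by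
  induction m with
  | zero => simp [qFact]; linarith
  | succ m ih =>
    rcases Nat.eq_zero_or_pos m with rfl | hm
    · simp [qFact, qInt]
    · have h2 : 1 + q ≤ qInt q (m + 1) := one_add_le_qInt hq0 (by omega)
      have hf := qFact_pos hq0 (q := q) m
      calc (1 + q) ^ (m + 1) = (1 + q) * (1 + q) ^ m := by ring
      _ ≤ (1 + q) * ((1 + q) * qFact q m) := by
          exact mul_le_mul_of_nonneg_left ih (by linarith)
      _ ≤ (1 + q) * (qInt q (m + 1) * qFact q m) := by
          exact mul_le_mul_of_nonneg_left
            (mul_le_mul_of_nonneg_right h2 hf.le) (by linarith)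
      _ = (1 + q) * qFact q (m + 1) := rfl

lemma summable_div_qFact {q : ℝ} (hq0 : 0 < q) (g : ℕ → ℝ) (C : ℝ)
    (h : ∀ m, |g m| ≤ C) : Summable fun m => g m / qFact q m := by
  have hr0 : (0:ℝ) < 1 + q := by linarith
  have hgeo : Summable (fun m : ℕ => (C * (1 + q)) * ((1 + q)⁻¹) ^ m) := by
    apply Summable.mul_left
    apply summable_geometric_of_lt_one (by positivity)
    exact inv_lt_one_of_one_lt₀ (by linarith)
  have key : ∀ m, |g m / qFact q m| ≤ (C * (1 + q)) * ((1 + q)⁻¹) ^ m := by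
    intro m
    have hf := qFact_pos hq0 (q := q) m
    have hC : 0 ≤ C := le_trans (abs_nonneg _) (h 0)
    have hpm : (0:ℝ) < (1 + q) ^ m := pow_pos hr0 m
    rw [abs_div, abs_of_pos hf, div_le_iff₀ hf, inv_pow]
    calc |g m| ≤ C := h m
    _ = C * (1 + q) * qFact q m * ((1 + q) * qFact q m)⁻¹ := by
        field_simp
    _ ≤ C * (1 + q) * qFact q m * ((1 + q) ^ m)⁻¹ := by
        apply mul_le_mul_of_nonneg_left (inv_anti₀ hpm (qFact_ge hq0 m))
        positivity
    _ = C * (1 + q) * ((1 + q) ^ m)⁻¹ * qFact q m := by ring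
  exact Summable.of_abs (hgeo.of_nonneg_of_le (fun m => abs_nonneg _) key)

/-- The q-falling factorial `[m]_q [m-1]_q ⋯ [m-k+1]_q`. -/
def qFall (q : ℝ) (m k : ℕ) : ℝ := ∏ i ∈ Finset.range k, qInt q (m - i)

lemma qFall_zero (q : ℝ) (m : ℕ) : qFall q m 0 = 1 := by simp [qFall]

lemma qFall_succ (q : ℝ) (m k : ℕ) : qFall q m (k + 1) = qFall q m k * qInt q (m - k) :=
  Finset.prod_range_succ _ _

lemma qFall_eq_zero (q : ℝ) {m k : ℕ} (h : m < k) : qFall q m k = 0 := by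
  apply Finset.prod_eq_zero (Finset.mem_range.mpr h)
  simp [qInt]

lemma qFall_nonneg {q : ℝ} (hq0 : 0 < q) (m k : ℕ) : 0 ≤ qFall q m k :=
  Finset.prod_nonneg fun i _ => qInt_nonneg hq0 _

lemma qFall_le {q : ℝ} (hq0 : 0 < q) (hq1 : q < 1) (m k : ℕ) :
    qFall q m k ≤ ((1 - q)⁻¹) ^ k := by
  calc qFall q m k ≤ ∏ _i ∈ Finset.range k, (1 - q)⁻¹ :=
        Finset.prod_le_prod (fun i _ => qInt_nonneg hq0 _) (fun i _ => qInt_le hq0 hq1 _)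
  _ = ((1 - q)⁻¹) ^ k := by simp

lemma qInt_split {q : ℝ} {k m : ℕ} (h : k ≤ m) :
    qInt q m = qInt q k + q ^ k * qInt q (m - k) := by
  obtain ⟨d, rfl⟩ := Nat.exists_eq_add_of_le h
  unfold qInt
  rw [Finset.sum_range_add, Nat.add_sub_cancel_left, Finset.mul_sum]
  congr 1
  exact Finset.sum_congr rfl fun i _ => (pow_add q k i)

lemma mul_qFall (q : ℝ) (m k : ℕ) :
    qInt q m * qFall q m k = qInt q k * qFall q m k + q ^ k * qFall q m (k + 1) := by
  rcases le_or_gt k m with h | h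
  · rw [qFall_succ, qInt_split (q := q) h]
    ring
  · rw [qFall_eq_zero q h, qFall_eq_zero q (by omega)]
    ring

lemma qStirling_eq_zero (q : ℝ) : ∀ n k, n < k → qStirling q n k = 0 := by
  intro n
  induction n with
  | zero => intro k hk; match k, hk with | k + 1, _ => rfl
  | succ n ih =>
    intro k hk
    match k, hk with
    | k + 1, hk =>
      show q ^ k * qStirling q n k + qInt q (k + 1) * qStirling q n (k + 1) = 0
      rw [ih k (by omega), ih (k + 1) (by omega)]
      ring

lemma key_expand (q : ℝ) (n m : ℕ) :
    qInt q m ^ n = ∑ k ∈ Finset.range (n + 1), qStirling q n k * qFall q m k := by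
  induction n with
  | zero => simp [qStirling, qFall_zero]
  | succ n ih =>
    have lhs : qInt q m ^ (n + 1)
        = ∑ k ∈ Finset.range (n + 1), qStirling q n k * (qInt q k * qFall q m k)
          + ∑ k ∈ Finset.range (n + 1), qStirling q n k * (q ^ k * qFall q m (k + 1)) := by
      rw [pow_succ, ih, Finset.sum_mul, ← Finset.sum_add_distrib]
      refine Finset.sum_congr rfl fun k _ => ?_
      rw [mul_assoc, mul_comm (qFall q m k), mul_qFall]
      ring
    rw [lhs, Finset.sum_range_succ' (fun k => qStirling q (n + 1) k * qFall q m k) (n + 1)]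
    have h0 : qStirling q (n + 1) 0 * qFall q m 0 = 0 := by
      show (0:ℝ) * qFall q m 0 = 0
      ring
    rw [h0, add_zero]
    have hstep : ∀ k, qStirling q (n + 1) (k + 1) * qFall q m (k + 1)
        = qInt q (k + 1) * qStirling q n (k + 1) * qFall q m (k + 1)
          + q ^ k * qStirling q n k * qFall q m (k + 1) := by
      intro k
      show (q ^ k * qStirling q n k + qInt q (k + 1) * qStirling q n (k + 1)) * qFall q m (k + 1) = _
      ring
    rw [Finset.sum_congr rfl (fun k _ => hstep k), Finset.sum_add_distrib]
    congr 1
    · -- first sums: Σ S(n,k) [k] qFall(m,k) = Σ [k+1] S(n,k+1) qFall(m,k+1)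
      rw [Finset.sum_range_succ' (fun k => qStirling q n k * (qInt q k * qFall q m k)) n]
      have : qStirling q n 0 * (qInt q 0 * qFall q m 0) = 0 := by
        simp [qInt]
      rw [this, add_zero, Finset.sum_range_succ]
      rw [qStirling_eq_zero q n (n + 1) (by omega)]
      rw [show qInt q (n + 1) * (0:ℝ) * qFall q m (n + 1) = 0 by ring, add_zero]
      refine Finset.sum_congr rfl fun k _ => ?_
      ring
    · refine Finset.sum_congr rfl fun k _ => ?_
      ring

lemma qFall_top (q : ℝ) (j k : ℕ) :
    qFall q (j + k + 1) (k + 1) = qFall q (j + k) k * qInt q (j + k + 1) := by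
  unfold qFall
  rw [Finset.prod_range_succ']
  congr 1
  refine Finset.prod_congr rfl fun i _ => ?_
  congr 1
  omega

lemma qFact_shift (q : ℝ) (j k : ℕ) :
    qFact q (j + k) = qFall q (j + k) k * qFact q j := by
  induction k with
  | zero => simp [qFall_zero]
  | succ k ih =>
    show qInt q (j + k + 1) * qFact q (j + k) = qFall q (j + k + 1) (k + 1) * qFact q j
    rw [ih, qFall_top]
    ring

lemma qFall_shift_pos {q : ℝ} (hq0 : 0 < q) (j k : ℕ) : 0 < qFall q (j + k) k := by
  apply Finset.prod_pos
  intro i hi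
  exact qInt_pos hq0 (by simp at hi; omega)

lemma tsum_shift {q : ℝ} (hq0 : 0 < q) (k : ℕ) :
    ∑' m : ℕ, qFall q m k / qFact q m = ∑' j : ℕ, 1 / qFact q j := by
  have hinj : Function.Injective (fun j : ℕ => j + k) := add_left_injective k
  have hsupp : (Function.support fun m : ℕ => qFall q m k / qFact q m)
      ⊆ Set.range (fun j : ℕ => j + k) := by
    intro m hm
    simp only [Function.mem_support] at hm
    rcases le_or_gt k m with h | h
    · exact ⟨m - k, by show m - k + k = m; omega⟩
    · exact absurd (by rw [qFall_eq_zero q h, zero_div]) hm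
  have heq := Function.Injective.tsum_eq (f := fun m => qFall q m k / qFact q m) hinj hsupp
  rw [← heq]
  refine tsum_congr fun j => ?_
  show qFall q (j + k) k / qFact q (j + k) = 1 / qFact q j
  have h1 : 0 < qFall q (j + k) k := qFall_shift_pos hq0 j k
  have h2 : 0 < qFact q j := qFact_pos hq0 j
  rw [qFact_shift, div_eq_div_iff (ne_of_gt (mul_pos h1 h2)) (ne_of_gt h2)]
  ring

/-- q-Dobinski formula: for `0 < q < 1` the series
`Σ_j 1/[j]_q!` and `Σ_m [m]_q^n/[m]_q!` converge, and
`(Σ_j 1/[j]_q!) · B_n(q) = Σ_m [m]_q^n/[m]_q!`, where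
`B_n(q) = Σ_{k=0}^{n} S_q(n,k)` is the n-th q-Bell number. -/
theorem q_dobinski (q : ℝ) (hq0 : 0 < q) (hq1 : q < 1) (n : ℕ) :
    (Summable fun j : ℕ => 1 / qFact q j) ∧
    (Summable fun m : ℕ => (qInt q m) ^ n / qFact q m) ∧
    (∑' j : ℕ, 1 / qFact q j) * (∑ k ∈ Finset.range (n + 1), qStirling q n k) =
      ∑' m : ℕ, (qInt q m) ^ n / qFact q m := by
  have hS1 : Summable fun j : ℕ => 1 / qFact q j := by
    simpa using summable_div_qFact hq0 (fun _ => 1) 1 (by simp)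
  have hS2 : Summable fun m : ℕ => (qInt q m) ^ n / qFact q m := by
    apply summable_div_qFact hq0 _ (((1 - q)⁻¹) ^ n)
    intro m
    rw [abs_of_nonneg (pow_nonneg (qInt_nonneg hq0 m) n)]
    exact pow_le_pow_left₀ (qInt_nonneg hq0 m) (qInt_le hq0 hq1 m) n
  have hSk : ∀ k : ℕ, Summable fun m : ℕ => qFall q m k / qFact q m := by
    intro k
    apply summable_div_qFact hq0 _ (((1 - q)⁻¹) ^ k)
    intro m
    rw [abs_of_nonneg (qFall_nonneg hq0 m k)]
    exact qFall_le hq0 hq1 m k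
  refine ⟨hS1, hS2, ?_⟩
  have main : ∑' m : ℕ, (qInt q m) ^ n / qFact q m
      = ∑ k ∈ Finset.range (n + 1), qStirling q n k * ∑' m : ℕ, qFall q m k / qFact q m := by
    calc ∑' m : ℕ, (qInt q m) ^ n / qFact q m
        = ∑' m : ℕ, ∑ k ∈ Finset.range (n + 1),
            qStirling q n k * (qFall q m k / qFact q m) := by
          refine tsum_congr fun m => ?_
          rw [key_expand, Finset.sum_div]
          exact Finset.sum_congr rfl fun k _ => mul_div_assoc _ _ _
    _ = ∑ k ∈ Finset.range (n + 1), ∑' m : ℕ,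
            qStirling q n k * (qFall q m k / qFact q m) :=
          Summable.tsum_finsetSum fun k _ => (hSk k).mul_left _
    _ = ∑ k ∈ Finset.range (n + 1), qStirling q n k * ∑' m : ℕ, qFall q m k / qFact q m :=
          Finset.sum_congr rfl fun k _ => tsum_mul_left
  rw [main]
  rw [Finset.mul_sum]
  refine Finset.sum_congr rfl fun k _ => ?_
  rw [tsum_shift hq0 k]
  ring
end

section
/- (Recurrence for the inversion q-Stirling numbers of the second kind.) For all natural numbers n ≥ 0 and k ≥ 1, the following identity holds in ℤ[q]: S^{inv}_q(n+1,k) = Σ_{l=0}^{n} binom(n,l)_q · S^{inv}_q(n−l, k−1), where binom(n,l)_q is the Gaussian binomial coefficient. -/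
/-- The maximum of the block of the partition `P` of `{1,…,n}` containing `i`
(and `0` if no block contains `i`). -/
def blockMax {n : ℕ} (P : Finpartition (Finset.Icc 1 n)) (i : ℕ) : ℕ :=
  (P.parts.filter (fun t => i ∈ t)).sup (fun t => t.sup id)

/-- The number of inversions of a set partition `P` of `{1,…,n}`: pairs `(i,j)` with
`1 ≤ j < i ≤ n` and `b_i < b_j`, where the blocks are listed in increasing order of
their maxima (so `b_i < b_j` iff the maximum of the block of `i` is smaller than the
maximum of the block of `j`). -/
def invStat {n : ℕ} (P : Finpartition (Finset.Icc 1 n)) : ℕ :=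
  (((Finset.Icc 1 n) ×ˢ (Finset.Icc 1 n)).filter
    (fun p => p.2 < p.1 ∧ blockMax P p.1 < blockMax P p.2)).card

/-- The inversion q-Stirling numbers of the second kind:
`S^{inv}_q(n,k) = Σ_π q^{inv(π)} ∈ ℤ[q]`, summed over the partitions of `{1,…,n}`
into exactly `k` nonempty blocks. -/
noncomputable def invStirling (n k : ℕ) : Polynomial ℤ :=
  ∑ P : Finpartition (Finset.Icc 1 n),
    if P.parts.card = k then Polynomial.X ^ invStat P else 0

/-- The Gaussian binomial coefficients in `ℤ[q]`. -/
noncomputable def qBinom : ℕ → ℕ → Polynomial ℤ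
  | _, 0 => 1
  | 0, _ + 1 => 0
  | n + 1, k + 1 => qBinom n k + Polynomial.X ^ (k + 1) * qBinom n (k + 1)

open Finset

section Gen

def gMax {A : Finset ℕ} (P : Finpartition A) (i : ℕ) : ℕ :=
  (P.parts.filter (fun t => i ∈ t)).sup (fun t => t.sup id)

def gInv {A : Finset ℕ} (P : Finpartition A) : ℕ :=
  ((A ×ˢ A).filter (fun p => p.2 < p.1 ∧ gMax P p.1 < gMax P p.2)).card

noncomputable def gStir (A : Finset ℕ) (k : ℕ) : Polynomial ℤ :=
  ∑ P : Finpartition A, if P.parts.card = k then Polynomial.X ^ gInv P else 0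

variable {A : Finset ℕ} (P : Finpartition A) {i j : ℕ}

lemma filter_parts_eq (hi : i ∈ A) :
    P.parts.filter (fun t => i ∈ t) = {P.part i} := by
  ext t
  simp only [mem_filter, mem_singleton]
  constructor
  · rintro ⟨ht, hit⟩; exact (P.part_eq_of_mem ht hit).symm
  · rintro rfl; exact ⟨P.part_mem.2 hi, P.mem_part hi⟩

lemma gMax_eq (hi : i ∈ A) : gMax P i = (P.part i).sup id := by
  rw [gMax, filter_parts_eq P hi, sup_singleton]

lemma gMax_mem_part (hi : i ∈ A) : gMax P i ∈ P.part i := by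
  obtain ⟨b, hb, hb'⟩ := (P.part i).exists_mem_eq_sup
    (P.nonempty_of_mem_parts (P.part_mem.2 hi)) id
  rw [gMax_eq P hi, hb']; exact hb

lemma gMax_mem (hi : i ∈ A) : gMax P i ∈ A :=
  P.le (P.part_mem.2 hi) (gMax_mem_part P hi)

lemma le_gMax (hi : i ∈ A) : i ≤ gMax P i := by
  rw [gMax_eq P hi]
  exact Finset.le_sup (f := id) (P.mem_part hi)

end Gen


section Pmap

variable {A : Finset ℕ} {f : ℕ → ℕ}

lemma image_injOn_subsets (hf : Set.InjOn f A) :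
    ∀ t ⊆ A, ∀ u ⊆ A, t.image f = u.image f → t = u := by
  intro t ht u hu h
  ext a
  constructor
  · intro hat
    have : f a ∈ u.image f := h ▸ mem_image_of_mem f hat
    obtain ⟨b, hbu, hba⟩ := mem_image.1 this
    exact (hf (hu hbu) (ht hat) hba) ▸ hbu
  · intro hau
    have : f a ∈ t.image f := h ▸ mem_image_of_mem f hau
    obtain ⟨b, hbt, hba⟩ := mem_image.1 this
    exact (hf (ht hbt) (hu hau) hba) ▸ hbt

def pmap (f : ℕ → ℕ) (hf : Set.InjOn f A) (P : Finpartition A) :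
    Finpartition (A.image f) where
  parts := P.parts.image (Finset.image f)
  supIndep := by
    rw [Finset.supIndep_iff_pairwiseDisjoint]
    intro t ht u hu hne
    simp only [coe_image, Set.mem_image, mem_coe] at ht hu
    obtain ⟨t', ht', rfl⟩ := ht
    obtain ⟨u', hu', rfl⟩ := hu
    have htu : t' ≠ u' := fun h => hne (by rw [h])
    have hd : Disjoint t' u' := P.disjoint ht' hu' htu
    rw [Finset.disjoint_left] at hd
    show Disjoint (t'.image f) (u'.image f)
    rw [Finset.disjoint_left]
    rintro x hxt hxu
    obtain ⟨a, hat, rfl⟩ := mem_image.1 hxt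
    obtain ⟨b, hbu, hba⟩ := mem_image.1 hxu
    have : b = a := hf (P.le hu' hbu) (P.le ht' hat) hba
    exact hd hat (this ▸ hbu)
  sup_parts := by
    ext x
    rw [Finset.mem_sup]
    constructor
    · rintro ⟨v, hv, hxv⟩
      obtain ⟨t, ht, rfl⟩ := mem_image.1 hv
      simp only [id_eq] at hxv
      obtain ⟨a, hat, rfl⟩ := mem_image.1 hxv
      exact mem_image_of_mem f (P.le ht hat)
    · intro hx
      obtain ⟨a, haA, rfl⟩ := mem_image.1 hx
      obtain ⟨t, ht, hat⟩ := P.exists_mem haA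
      exact ⟨t.image f, mem_image_of_mem _ ht, mem_image_of_mem f hat⟩
  bot_notMem := by
    simp only [bot_eq_empty, mem_image]
    rintro ⟨t, ht, h⟩
    exact (P.nonempty_of_mem_parts ht).ne_empty (Finset.image_eq_empty.1 h)

lemma pmap_parts_card (hf : Set.InjOn f A) (P : Finpartition A) :
    (pmap f hf P).parts.card = P.parts.card := by
  apply Finset.card_image_of_injOn
  intro t ht u hu h
  exact image_injOn_subsets hf t (P.le ht) u (P.le hu) h

lemma pmap_part (hf : Set.InjOn f A) (P : Finpartition A) (hi : i ∈ A) :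
    (pmap f hf P).part (f i) = (P.part i).image f := by
  refine (pmap f hf P).part_eq_of_mem ?_ ?_
  · exact mem_image_of_mem _ (P.part_mem.2 hi)
  · exact mem_image_of_mem f (P.mem_part hi)

lemma sup_image_of_monoOn (hm : MonotoneOn f A) {t : Finset ℕ}
    (ht : t ⊆ A) (hne : t.Nonempty) : (t.image f).sup id = f (t.sup id) := by
  obtain ⟨b, hb, hb'⟩ := t.exists_mem_eq_sup hne id
  rw [hb']
  apply le_antisymm
  · apply Finset.sup_le
    intro x hx
    obtain ⟨a, hat, rfl⟩ := mem_image.1 hx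
    exact hm (ht hat) (ht hb) (hb' ▸ Finset.le_sup (f := id) hat)
  · exact Finset.le_sup (f := id) (mem_image_of_mem f hb)

lemma gMax_pmap (hm : StrictMonoOn f A) (P : Finpartition A) (hi : i ∈ A) :
    gMax (pmap f hm.injOn P) (f i) = f (gMax P i) := by
  rw [gMax_eq _ (mem_image_of_mem f hi), pmap_part hm.injOn P hi,
    sup_image_of_monoOn hm.monotoneOn (P.le (P.part_mem.2 hi))
      (P.nonempty_of_mem_parts (P.part_mem.2 hi)), ← gMax_eq P hi]

lemma gInv_copy {A B : Finset ℕ} (P : Finpartition A) (h : A = B) :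
    gInv (P.copy h) = gInv P := by subst h; rfl

lemma gInv_pmap (hm : StrictMonoOn f A) (P : Finpartition A) :
    gInv (pmap f hm.injOn P) = gInv P := by
  rw [gInv, gInv]
  have himg : ((A.image f ×ˢ A.image f).filter
      (fun p => p.2 < p.1 ∧ gMax (pmap f hm.injOn P) p.1 < gMax (pmap f hm.injOn P) p.2))
      = ((A ×ˢ A).filter (fun p => p.2 < p.1 ∧ gMax P p.1 < gMax P p.2)).image
        (Prod.map f f) := by
    ext ⟨x, y⟩
    constructor
    · intro hxy
      obtain ⟨⟨hx, hy⟩, hlt, hmax⟩ :=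
        (mem_filter.1 hxy).imp (fun h => mem_product.1 h) id
      obtain ⟨a, ha, rfl⟩ := mem_image.1 hx
      obtain ⟨b, hb, rfl⟩ := mem_image.1 hy
      refine mem_image.2 ⟨(a, b), mem_filter.2 ⟨mem_product.2 ⟨ha, hb⟩, ?_, ?_⟩, rfl⟩
      · exact (hm.lt_iff_lt hb ha).1 hlt
      · rw [gMax_pmap hm P ha, gMax_pmap hm P hb] at hmax
        exact (hm.lt_iff_lt (gMax_mem P ha) (gMax_mem P hb)).1 hmax
    · intro hxy
      obtain ⟨⟨a, b⟩, hab, heq⟩ := mem_image.1 hxy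
      obtain ⟨hmem, hlt, hmax⟩ := (mem_filter.1 hab).imp (fun h => mem_product.1 h) id
      obtain ⟨ha, hb⟩ := hmem
      cases heq
      refine mem_filter.2 ⟨mem_product.2
        ⟨mem_image_of_mem f ha, mem_image_of_mem f hb⟩, hm hb ha hlt, ?_⟩
      rw [gMax_pmap hm P ha, gMax_pmap hm P hb]
      exact hm (gMax_mem P ha) (gMax_mem P hb) hmax
  rw [himg]
  apply Finset.card_image_of_injOn
  intro p hp q hq h
  simp only [mem_coe, mem_filter, mem_product] at hp hq
  have h1 := congrArg Prod.fst h
  have h2 := congrArg Prod.snd h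
  simp only [Prod.map] at h1 h2
  exact Prod.ext (hm.injOn hp.1.1 hq.1.1 h1) (hm.injOn hp.1.2 hq.1.2 h2)

lemma gStir_pmap (hm : StrictMonoOn f A) (k : ℕ) :
    gStir (A.image f) k = gStir A k := by
  classical
  rw [gStir, gStir]
  set g := Function.invFunOn f A with hg
  have hgf : ∀ a ∈ A, g (f a) = a := fun a ha => hm.injOn.leftInvOn_invFunOn ha
  have hfg : ∀ x ∈ A.image f, f (g x) = x := by
    intro x hx
    obtain ⟨a, ha, rfl⟩ := mem_image.1 hx
    rw [hgf a ha]
  have hginj : Set.InjOn g (A.image f) := by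
    intro x hx y hy hxy
    rw [← hfg x hx, ← hfg y hy, hxy]
  have hAg : (A.image f).image g = A := by
    rw [Finset.image_image]
    calc A.image (g ∘ f) = A.image id := Finset.image_congr (fun a ha => hgf a ha)
    _ = A := Finset.image_id
  refine Finset.sum_bij' (fun Q _ => (pmap g hginj Q).copy hAg)
    (fun P _ => pmap f hm.injOn P) (fun _ _ => mem_univ _) (fun _ _ => mem_univ _)
    ?_ ?_ ?_
  · intro Q _
    apply Finpartition.ext
    show ((Q.parts.image (Finset.image g)).image (Finset.image f)) = Q.parts
    rw [Finset.image_image]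
    refine Finset.image_congr ?_ |>.trans Finset.image_id
    intro t ht
    simp only [Function.comp_apply, Finset.image_image]
    refine Finset.image_congr ?_ |>.trans Finset.image_id
    intro a ha
    exact hfg a (Q.le ht ha)
  · intro P _
    apply Finpartition.ext
    show ((P.parts.image (Finset.image f)).image (Finset.image g)) = P.parts
    rw [Finset.image_image]
    refine Finset.image_congr ?_ |>.trans Finset.image_id
    intro t ht
    simp only [Function.comp_apply, Finset.image_image]
    refine Finset.image_congr ?_ |>.trans Finset.image_id
    intro a ha
    exact hgf a (P.le ht ha)
  · intro Q _
    have h1 : ((pmap g hginj Q).copy hAg).parts.card = Q.parts.card := by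
      show (pmap g hginj Q).parts.card = Q.parts.card
      exact pmap_parts_card hginj Q
    have hgm : StrictMonoOn g (A.image f) := by
      intro x hx y hy hxy
      obtain ⟨a, ha, rfl⟩ := mem_image.1 hx
      obtain ⟨b, hb, rfl⟩ := mem_image.1 hy
      rw [hgf a ha, hgf b hb]
      by_contra hab
      push_neg at hab
      rcases hab.lt_or_eq with h' | h'
      · exact absurd (hm hb ha h') (by omega)
      · subst h'; exact lt_irrefl _ hxy
    have h2 : gInv ((pmap g hginj Q).copy hAg) = gInv Q := by
      rw [gInv_copy]
      exact gInv_pmap hgm Q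
    rw [h1, h2]

end Pmap

lemma gStir_eq_card (T : Finset ℕ) (k : ℕ) :
    gStir T k = gStir (Finset.Icc 1 T.card) k := by
  classical
  set c := T.card with hc
  set emb := T.orderEmbOfFin hc.symm with hemb
  set f : ℕ → ℕ := fun i => if h : i - 1 < c then emb ⟨i - 1, h⟩ else 0 with hf
  have hfval : ∀ i ∈ Finset.Icc 1 c, ∀ (h : i - 1 < c), f i = emb ⟨i - 1, h⟩ := by
    intro i _ h
    simp only [hf, dif_pos h]
  have hmono : StrictMonoOn f (Finset.Icc 1 c) := by
    intro x hx y hy hxy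
    simp only [coe_Icc, Set.mem_Icc] at hx hy
    have hx' : x - 1 < c := by omega
    have hy' : y - 1 < c := by omega
    simp only [hf, dif_pos hx', dif_pos hy']
    exact emb.strictMono (by simp only [Fin.mk_lt_mk]; omega)
  have himg : (Finset.Icc 1 c).image f = T := by
    ext x
    constructor
    · intro hx
      obtain ⟨i, hi, rfl⟩ := mem_image.1 hx
      rw [mem_Icc] at hi
      have h : i - 1 < c := by omega
      simp only [hf, dif_pos h]
      exact T.orderEmbOfFin_mem hc.symm _
    · intro hx
      have : x ∈ Set.range emb := by rw [T.range_orderEmbOfFin hc.symm]; exact hx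
      obtain ⟨⟨j, hj⟩, rfl⟩ := this
      refine mem_image.2 ⟨j + 1, mem_Icc.2 ⟨by omega, by omega⟩, ?_⟩
      have h : j + 1 - 1 < c := by omega
      simp only [hf, dif_pos h]
      congr 1
  calc gStir T k = gStir ((Finset.Icc 1 c).image f) k := by rw [himg]
  _ = gStir (Finset.Icc 1 c) k := by
      have hm : StrictMonoOn f ↑(Finset.Icc 1 c) := by
        simpa using hmono
      exact gStir_pmap hm k

section Decomp

variable {n : ℕ} {S : Finset ℕ}

lemma sdiff_union_insert (hS : S ⊆ Finset.Icc 1 n) :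
    (Finset.Icc 1 n \ S) ⊔ insert (n + 1) S = Finset.Icc 1 (n + 1) := by
  ext x
  have hSx : x ∈ S → 1 ≤ x ∧ x ≤ n := fun h => mem_Icc.1 (hS h)
  simp only [sup_eq_union, mem_union, mem_sdiff, mem_insert, mem_Icc]
  constructor
  · rintro (⟨⟨h1, h2⟩, -⟩ | rfl | hxs)
    · omega
    · omega
    · have := hSx hxs; omega
  · rintro ⟨h1, h2⟩
    by_cases hxS : x ∈ S
    · right; right; exact hxS
    · rcases Nat.lt_or_ge x (n + 1) with h | h
      · exact Or.inl ⟨⟨h1, by omega⟩, hxS⟩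
      · right; left; omega

lemma disjoint_sdiff_insert (hS : S ⊆ Finset.Icc 1 n) :
    Disjoint (Finset.Icc 1 n \ S) (insert (n + 1) S) := by
  rw [Finset.disjoint_left]
  intro x hx hx'
  rw [mem_sdiff, mem_Icc] at hx
  rcases mem_insert.1 hx' with rfl | h
  · omega
  · exact hx.2 h

/-- extend a partition of `Icc 1 n \ S` by the new block `insert (n+1) S`. -/
def extendP (hS : S ⊆ Finset.Icc 1 n) (Q : Finpartition (Finset.Icc 1 n \ S)) :
    Finpartition (Finset.Icc 1 (n + 1)) :=
  Q.extend (b := insert (n + 1) S)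
    (by rw [Finset.bot_eq_empty]; exact (Finset.insert_nonempty _ _).ne_empty)
    (disjoint_sdiff_insert hS) (sdiff_union_insert hS)

lemma extendP_parts (hS : S ⊆ Finset.Icc 1 n) (Q : Finpartition (Finset.Icc 1 n \ S)) :
    (extendP hS Q).parts = insert (insert (n + 1) S) Q.parts := rfl

lemma extendP_part_top (hS : S ⊆ Finset.Icc 1 n) (Q : Finpartition (Finset.Icc 1 n \ S)) :
    (extendP hS Q).part (n + 1) = insert (n + 1) S := by
  refine (extendP hS Q).part_eq_of_mem ?_ ?_
  · rw [extendP_parts]; exact mem_insert_self _ _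
  · exact mem_insert_self _ _

/-- restrict a partition of `Icc 1 (n+1)` by deleting the block of `n+1`. -/
def restP (P : Finpartition (Finset.Icc 1 (n + 1))) :
    Finpartition (Finset.Icc 1 (n + 1) \ P.part (n + 1)) := by
  have hmem : n + 1 ∈ Finset.Icc 1 (n + 1) := by simp [mem_Icc]
  refine P.ofSubset (parts := P.parts.erase (P.part (n + 1))) (erase_subset _ _) ?_
  ext x
  rw [Finset.mem_sup]
  constructor
  · rintro ⟨t, ht, hxt⟩
    have ht' := mem_of_mem_erase ht
    rw [mem_sdiff]
    refine ⟨P.le ht' hxt, fun hxB => ?_⟩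
    exact (ne_of_mem_erase ht) (P.eq_of_mem_parts ht' (P.part_mem.2 hmem) hxt hxB)
  · intro hx
    rw [mem_sdiff] at hx
    refine ⟨P.part x, ?_, P.mem_part hx.1⟩
    refine mem_erase.2 ⟨fun h => hx.2 (h ▸ P.mem_part hx.1), P.part_mem.2 hx.1⟩

lemma restP_parts (P : Finpartition (Finset.Icc 1 (n + 1))) :
    (restP P).parts = P.parts.erase (P.part (n + 1)) := rfl

end Decomp

section Core

variable {n : ℕ} {S : Finset ℕ}

def cStat (n : ℕ) (S : Finset ℕ) : ℕ :=
  (((Finset.Icc 1 n \ S) ×ˢ S).filter (fun p => p.2 < p.1)).card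

lemma mem_top_Icc : n + 1 ∈ Finset.Icc 1 (n + 1) := by simp [mem_Icc]

variable (P : Finpartition (Finset.Icc 1 (n + 1)))

lemma part_top_eq (hP : (P.part (n + 1)).erase (n + 1) = S) : P.part (n + 1) = insert (n + 1) S := by
  rw [← hP, Finset.insert_erase (P.mem_part mem_top_Icc)]

lemma sdiff_part_top (hS : S ⊆ Finset.Icc 1 n)
    (hP : (P.part (n + 1)).erase (n + 1) = S) : Finset.Icc 1 (n + 1) \ P.part (n + 1) = Finset.Icc 1 n \ S := by
  rw [part_top_eq P hP]
  ext x
  have hSx : x ∈ S → 1 ≤ x ∧ x ≤ n := fun h => mem_Icc.1 (hS h)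
  simp only [mem_sdiff, mem_insert, mem_Icc, not_or]
  by_cases hxS : x ∈ S
  · have := hSx hxS
    simp [hxS]
  · simp only [hxS, not_false_iff, and_true]
    omega

lemma gMax_top {x : ℕ} (hx : x ∈ P.part (n + 1)) : gMax P x = n + 1 := by
  have hBmem := P.part_mem.2 mem_top_Icc
  have hxA : x ∈ Finset.Icc 1 (n + 1) := P.le hBmem hx
  rw [gMax_eq P hxA, P.part_eq_of_mem hBmem hx]
  apply le_antisymm
  · exact Finset.sup_le fun y hy => (mem_Icc.1 (P.le hBmem hy)).2
  · exact Finset.le_sup (f := id) (P.mem_part mem_top_Icc)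

lemma gMax_restP (hS : S ⊆ Finset.Icc 1 n)
    (hP : (P.part (n + 1)).erase (n + 1) = S) {x : ℕ} (hx : x ∉ P.part (n + 1)) :
    gMax ((restP P).copy (sdiff_part_top P hS hP)) x = gMax P x := by
  have hparts : ((restP P).copy (sdiff_part_top P hS hP)).parts
      = P.parts.erase (P.part (n + 1)) := rfl
  rw [gMax, gMax, hparts]
  congr 1
  ext t
  simp only [mem_filter, mem_erase]
  constructor
  · rintro ⟨⟨-, ht⟩, hxt⟩; exact ⟨ht, hxt⟩
  · rintro ⟨ht, hxt⟩
    exact ⟨⟨fun h => hx (h ▸ hxt), ht⟩, hxt⟩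

lemma gMax_le_n {x : ℕ} (hxA : x ∈ Finset.Icc 1 (n + 1)) (hx : x ∉ P.part (n + 1)) :
    gMax P x ≤ n := by
  have h1 : gMax P x ∈ P.part x := gMax_mem_part P hxA
  have h2 : gMax P x ≤ n + 1 := (mem_Icc.1 (gMax_mem P hxA)).2
  rcases Nat.lt_or_ge (gMax P x) (n + 1) with h | h
  · omega
  · exfalso
    have heq : gMax P x = n + 1 := by omega
    rw [heq] at h1
    exact hx (P.eq_of_mem_parts (P.part_mem.2 hxA) (P.part_mem.2 mem_top_Icc)
      h1 (P.mem_part mem_top_Icc) ▸ P.mem_part hxA)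

lemma gInv_decomp (hS : S ⊆ Finset.Icc 1 n)
    (hP : (P.part (n + 1)).erase (n + 1) = S) :
    gInv P = cStat n S + gInv ((restP P).copy (sdiff_part_top P hS hP)) := by
  classical
  set B := P.part (n + 1) with hB
  set Q := (restP P).copy (sdiff_part_top P hS hP) with hQ
  have hmemx : ∀ x, x ∈ Finset.Icc 1 n \ S ↔ x ∈ Finset.Icc 1 (n + 1) ∧ x ∉ B := by
    intro x
    rw [← sdiff_part_top P hS hP, mem_sdiff]
  have hSB : S ⊆ B := by rw [← hP]; exact erase_subset _ _
  rw [gInv, ← Finset.card_filter_add_card_filter_not (p := fun p => p.2 ∈ B)]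
  congr 1
  · rw [cStat]
    congr 1
    ext ⟨x, y⟩
    simp only [Finset.filter_filter, mem_filter, mem_product]
    constructor
    · rintro ⟨⟨hx, hy⟩, ⟨hlt, hmax⟩, hyB⟩
      have hxB : x ∉ B := by
        intro hxB
        rw [gMax_top P hxB, gMax_top P hyB] at hmax
        exact lt_irrefl _ hmax
      have hyS : y ∈ S := by
        rw [← hP]
        refine mem_erase.2 ⟨?_, hyB⟩
        have := (mem_Icc.1 hx).2
        omega
      exact ⟨⟨(hmemx x).2 ⟨hx, hxB⟩, hyS⟩, hlt⟩
    · rintro ⟨⟨hx, hyS⟩, hlt⟩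
      have hx' := (hmemx x).1 hx
      have hyB : y ∈ B := hSB hyS
      refine ⟨⟨hx'.1, P.le (P.part_mem.2 mem_top_Icc) hyB⟩, ⟨hlt, ?_⟩, hyB⟩
      rw [gMax_top P hyB]
      have := gMax_le_n P hx'.1 hx'.2
      omega
  · rw [gInv]
    congr 1
    ext ⟨x, y⟩
    simp only [Finset.filter_filter, mem_filter, mem_product]
    constructor
    · rintro ⟨⟨hx, hy⟩, ⟨hlt, hmax⟩, hyB⟩
      have hxB : x ∉ B := by
        intro hxB
        rw [gMax_top P hxB] at hmax
        have := gMax_le_n P hy hyB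
        omega
      rw [gMax_restP P hS hP hxB, gMax_restP P hS hP hyB]
      exact ⟨⟨(hmemx x).2 ⟨hx, hxB⟩, (hmemx y).2 ⟨hy, hyB⟩⟩, hlt, hmax⟩
    · rintro ⟨⟨hx, hy⟩, hlt, hmax⟩
      have hx' := (hmemx x).1 hx
      have hy' := (hmemx y).1 hy
      rw [gMax_restP P hS hP hx'.2, gMax_restP P hS hP hy'.2] at hmax
      exact ⟨⟨hx'.1, hy'.1⟩, ⟨hlt, hmax⟩, hy'.2⟩

lemma card_parts_decomp (hS : S ⊆ Finset.Icc 1 n)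
    (hP : (P.part (n + 1)).erase (n + 1) = S) :
    P.parts.card = ((restP P).copy (sdiff_part_top P hS hP)).parts.card + 1 := by
  have hBmem := P.part_mem.2 (mem_top_Icc (n := n))
  have h1 : ((restP P).copy (sdiff_part_top P hS hP)).parts
      = P.parts.erase (P.part (n + 1)) := rfl
  have h2 := Finset.card_erase_of_mem hBmem
  have h3 : 0 < P.parts.card := Finset.card_pos.2 ⟨_, hBmem⟩
  have h1' : ((restP P).copy (sdiff_part_top P hS hP)).parts.card = P.parts.card - 1 := by
    rw [h1, h2]
  omega

end Core

section Gauss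

open Polynomial

variable {n : ℕ} {S : Finset ℕ}

lemma not_mem_succ (hS : S ⊆ Finset.Icc 1 n) : n + 1 ∉ S :=
  fun h => by have := mem_Icc.1 (hS h); omega

lemma Icc_succ_sdiff (hS : S ⊆ Finset.Icc 1 n) :
    Finset.Icc 1 (n + 1) \ S = insert (n + 1) (Finset.Icc 1 n \ S) := by
  ext x
  have hSx : x ∈ S → 1 ≤ x ∧ x ≤ n := fun h => mem_Icc.1 (hS h)
  simp only [mem_sdiff, mem_insert, mem_Icc]
  by_cases hxS : x ∈ S
  · have := hSx hxS
    simp only [hxS, not_true, and_false, false_iff, not_or]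
    constructor
    · omega
    · simp [hxS]
  · simp only [hxS, not_false_iff, and_true]
    omega

lemma Icc_succ_sdiff_insert (hS : S ⊆ Finset.Icc 1 n) :
    Finset.Icc 1 (n + 1) \ insert (n + 1) S = Finset.Icc 1 n \ S := by
  ext x
  simp only [mem_sdiff, mem_insert, mem_Icc, not_or]
  by_cases hxS : x ∈ S
  · simp [hxS]
  · simp only [hxS, not_false_iff, and_true]
    omega

lemma cStat_succ_not_mem (hS : S ⊆ Finset.Icc 1 n) :
    cStat (n + 1) S = cStat n S + S.card := by
  classical
  rw [cStat, Icc_succ_sdiff hS, Finset.insert_eq, Finset.union_product,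
    Finset.filter_union, Finset.card_union_of_disjoint, cStat]
  · rw [add_comm]
    congr 1
    rw [Finset.filter_true_of_mem, Finset.card_product, Finset.card_singleton, one_mul]
    rintro ⟨x, y⟩ hxy
    rw [mem_product, mem_singleton] at hxy
    have := mem_Icc.1 (hS hxy.2)
    simp only [hxy.1]
    omega
  · refine Finset.disjoint_filter_filter ?_
    rw [Finset.disjoint_left]
    rintro ⟨x, y⟩ hxy hxy'
    rw [mem_product, mem_singleton] at hxy
    rw [mem_product, mem_sdiff, mem_Icc] at hxy'
    omega

lemma cStat_succ_insert (hS : S ⊆ Finset.Icc 1 n) :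
    cStat (n + 1) (insert (n + 1) S) = cStat n S := by
  classical
  rw [cStat, Icc_succ_sdiff_insert hS, Finset.insert_eq, Finset.product_union,
    Finset.filter_union, cStat]
  have h1 : ((Finset.Icc 1 n \ S) ×ˢ {n + 1}).filter (fun p => p.2 < p.1) = ∅ := by
    rw [Finset.filter_false_of_mem]
    rintro ⟨x, y⟩ hxy
    rw [mem_product, mem_singleton, mem_sdiff, mem_Icc] at hxy
    simp only
    omega
  rw [h1, Finset.empty_union]

lemma Icc_succ_insert (n : ℕ) :
    Finset.Icc 1 (n + 1) = insert (n + 1) (Finset.Icc 1 n) := by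
  ext x
  simp only [mem_Icc, mem_insert]
  omega

lemma sum_cStat_pow (n : ℕ) : ∀ l : ℕ,
    (∑ S ∈ (Finset.Icc 1 n).powerset,
      (if S.card = l then (Polynomial.X : Polynomial ℤ) ^ (cStat n S) else 0)) =
      qBinom n l := by
  classical
  induction n with
  | zero =>
    intro l
    rw [show Finset.Icc 1 0 = (∅ : Finset ℕ) by simp, Finset.powerset_empty,
      Finset.sum_singleton]
    match l with
    | 0 =>
      rw [if_pos (Finset.card_empty)]
      have : cStat 0 ∅ = 0 := by simp [cStat]
      rw [this, pow_zero, qBinom]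
    | m + 1 =>
      rw [if_neg (by simp), qBinom]
  | succ n ih =>
    intro l
    rw [Icc_succ_insert n, Finset.powerset_insert, Finset.sum_union, Finset.sum_image]
    · have hnot : n + 1 ∉ Finset.Icc 1 n := by simp [mem_Icc]
      have h2 : ∀ S ∈ (Finset.Icc 1 n).powerset,
          (if (insert (n + 1) S).card = l then
            (Polynomial.X : Polynomial ℤ) ^ (cStat (n + 1) (insert (n + 1) S)) else 0)
          = (if S.card + 1 = l then (Polynomial.X : Polynomial ℤ) ^ (cStat n S) else 0) := by
        intro S hS
        rw [mem_powerset] at hS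
        rw [Finset.card_insert_of_notMem (fun h => hnot (hS h)), cStat_succ_insert hS]
      have h1 : ∀ S ∈ (Finset.Icc 1 n).powerset,
          (if S.card = l then
            (Polynomial.X : Polynomial ℤ) ^ (cStat (n + 1) S) else 0)
          = Polynomial.X ^ l *
            (if S.card = l then (Polynomial.X : Polynomial ℤ) ^ (cStat n S) else 0) := by
        intro S hS
        rw [mem_powerset] at hS
        by_cases h : S.card = l
        · rw [if_pos h, if_pos h, cStat_succ_not_mem hS, h, pow_add, mul_comm]
        · rw [if_neg h, if_neg h, mul_zero]
      rw [Finset.sum_congr rfl h2, Finset.sum_congr rfl h1, ← Finset.mul_sum, ih l]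
      match l with
      | 0 =>
        have : ∀ S ∈ (Finset.Icc 1 n).powerset,
            (if S.card + 1 = 0 then (Polynomial.X : Polynomial ℤ) ^ (cStat n S) else 0)
            = 0 := by
          intro S _; rw [if_neg (by omega)]
        rw [Finset.sum_congr rfl this, Finset.sum_const_zero, add_zero]
        simp [qBinom]
      | m + 1 =>
        have : ∀ S ∈ (Finset.Icc 1 n).powerset,
            (if S.card + 1 = m + 1 then (Polynomial.X : Polynomial ℤ) ^ (cStat n S) else 0)
            = (if S.card = m then (Polynomial.X : Polynomial ℤ) ^ (cStat n S) else 0) := by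
          intro S _
          refine if_congr (by omega) rfl rfl
        rw [Finset.sum_congr rfl this, ih m]
        show Polynomial.X ^ (m + 1) * qBinom n (m + 1) + qBinom n m = qBinom (n + 1) (m + 1)
        rw [qBinom, add_comm]
    · -- injectivity of insert on powerset
      intro a ha b hb hab
      rw [mem_coe, mem_powerset] at ha hb
      have hna : n + 1 ∉ a := fun h => by have := mem_Icc.1 (ha h); omega
      have hnb : n + 1 ∉ b := fun h => by have := mem_Icc.1 (hb h); omega
      rw [← Finset.erase_insert hna, ← Finset.erase_insert hnb, hab]
    · -- disjointness
      rw [Finset.disjoint_left]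
      intro T hT hT'
      rw [mem_powerset] at hT
      obtain ⟨a, _, rfl⟩ := Finset.mem_image.1 hT'
      have : n + 1 ∈ Finset.Icc 1 n := hT (mem_insert_self _ _)
      rw [mem_Icc] at this
      omega

end Gauss

section Fiber

open Polynomial

variable {n k : ℕ}

lemma fiber_sum (hk : 1 ≤ k) {S : Finset ℕ} (hS : S ⊆ Finset.Icc 1 n) :
    (∑ P ∈ Finset.univ.filter
        (fun P : Finpartition (Finset.Icc 1 (n + 1)) =>
          (P.part (n + 1)).erase (n + 1) = S),
      (if P.parts.card = k then (Polynomial.X : Polynomial ℤ) ^ gInv P else 0))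
    = ∑ Q : Finpartition (Finset.Icc 1 n \ S),
      (if Q.parts.card = k - 1 then
        (Polynomial.X : Polynomial ℤ) ^ (gInv Q + cStat n S) else 0) := by
  classical
  refine Finset.sum_bij'
    (fun P hP => (restP P).copy (sdiff_part_top P hS (Finset.mem_filter.1 hP).2))
    (fun Q _ => extendP hS Q) (fun _ _ => mem_univ _) ?_ ?_ ?_ ?_
  · intro Q _
    refine Finset.mem_filter.2 ⟨mem_univ _, ?_⟩
    rw [extendP_part_top hS Q, Finset.erase_insert (not_mem_succ hS)]
  · intro P hP
    have hP' := (Finset.mem_filter.1 hP).2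
    apply Finpartition.ext
    rw [extendP_parts]
    show insert (insert (n + 1) S) (P.parts.erase (P.part (n + 1))) = P.parts
    rw [← part_top_eq P hP', Finset.insert_erase (P.part_mem.2 mem_top_Icc)]
  · intro Q _
    have hnotin : insert (n + 1) S ∉ Q.parts := by
      intro h
      have := Q.le h (mem_insert_self _ _)
      rw [mem_sdiff, mem_Icc] at this
      omega
    apply Finpartition.ext
    show (extendP hS Q).parts.erase ((extendP hS Q).part (n + 1)) = Q.parts
    rw [extendP_part_top hS Q, extendP_parts, Finset.erase_insert hnotin]
  · intro P hP
    have hP' := (Finset.mem_filter.1 hP).2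
    beta_reduce
    rw [card_parts_decomp P hS hP', gInv_decomp P hS hP']
    refine if_congr (by omega) (by rw [add_comm]) rfl

end Fiber

/-- recurrence for the inversion q-Stirling numbers of the second kind:
`S^{inv}_q(n+1,k) = Σ_{l=0}^{n} binom(n,l)_q · S^{inv}_q(n−l, k−1)` in `ℤ[q]`. -/
theorem invStirling_recurrence (n k : ℕ) (hk : 1 ≤ k) :
    invStirling (n + 1) k =
      ∑ l ∈ Finset.range (n + 1), qBinom n l * invStirling (n - l) (k - 1) := by
  classical
  have hmaps : ∀ P ∈ (Finset.univ : Finset (Finpartition (Finset.Icc 1 (n + 1)))),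
      (P.part (n + 1)).erase (n + 1) ∈ (Finset.Icc 1 n).powerset := by
    intro P _
    rw [Finset.mem_powerset]
    intro x hx
    rw [Finset.mem_erase] at hx
    have := Finset.mem_Icc.1 (P.le (P.part_mem.2 mem_top_Icc) hx.2)
    rw [Finset.mem_Icc]
    omega
  have h0 : invStirling (n + 1) k = ∑ P : Finpartition (Finset.Icc 1 (n + 1)),
      (if P.parts.card = k then (Polynomial.X : Polynomial ℤ) ^ gInv P else 0) := rfl
  rw [h0, ← Finset.sum_fiberwise_of_maps_to hmaps
    (fun P => if P.parts.card = k then (Polynomial.X : Polynomial ℤ) ^ gInv P else 0)]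
  have step1 : ∀ S ∈ (Finset.Icc 1 n).powerset,
      (∑ P ∈ Finset.univ.filter
          (fun P : Finpartition (Finset.Icc 1 (n + 1)) =>
            (P.part (n + 1)).erase (n + 1) = S),
        (if P.parts.card = k then (Polynomial.X : Polynomial ℤ) ^ gInv P else 0))
      = (Polynomial.X : Polynomial ℤ) ^ (cStat n S) * invStirling (n - S.card) (k - 1) := by
    intro S hSm
    have hS := Finset.mem_powerset.1 hSm
    rw [fiber_sum hk hS]
    have key : ∀ Q : Finpartition (Finset.Icc 1 n \ S),
        (if Q.parts.card = k - 1 then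
          (Polynomial.X : Polynomial ℤ) ^ (gInv Q + cStat n S) else 0)
        = Polynomial.X ^ (cStat n S) *
          (if Q.parts.card = k - 1 then (Polynomial.X : Polynomial ℤ) ^ (gInv Q) else 0) := by
      intro Q
      by_cases h : Q.parts.card = k - 1
      · rw [if_pos h, if_pos h, pow_add, mul_comm]
      · rw [if_neg h, if_neg h, mul_zero]
    rw [Finset.sum_congr rfl (fun Q _ => key Q), ← Finset.mul_sum]
    congr 1
    have h1 : (∑ Q : Finpartition (Finset.Icc 1 n \ S),
        (if Q.parts.card = k - 1 then (Polynomial.X : Polynomial ℤ) ^ (gInv Q) else 0))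
        = gStir (Finset.Icc 1 n \ S) (k - 1) := rfl
    rw [h1, gStir_eq_card]
    have hcard : (Finset.Icc 1 n \ S).card = n - S.card := by
      rw [Finset.card_sdiff_of_subset hS, Nat.card_Icc]
      omega
    rw [hcard]
    rfl
  rw [Finset.sum_congr rfl step1]
  have hmaps2 : ∀ S ∈ (Finset.Icc 1 n).powerset, S.card ∈ Finset.range (n + 1) := by
    intro S hSm
    have := Finset.card_le_card (Finset.mem_powerset.1 hSm)
    rw [Nat.card_Icc] at this
    rw [Finset.mem_range]
    omega
  rw [← Finset.sum_fiberwise_of_maps_to hmaps2 _]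
  refine Finset.sum_congr rfl ?_
  intro l hl
  have hcongr : ∀ S ∈ ((Finset.Icc 1 n).powerset.filter (fun S => S.card = l)),
      (Polynomial.X : Polynomial ℤ) ^ (cStat n S) * invStirling (n - S.card) (k - 1)
      = (Polynomial.X : Polynomial ℤ) ^ (cStat n S) * invStirling (n - l) (k - 1) := by
    intro S hSm
    rw [(Finset.mem_filter.1 hSm).2]
  rw [Finset.sum_congr rfl hcongr, ← Finset.sum_mul]
  congr 1
  rw [← sum_cStat_pow n l, Finset.sum_filter]
end
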